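/- Let G be a Lie group acting smoothly on ℝⁿ and let f : ℝⁿ → ℝ be G-invariant, i.e., f(g·x) = f(x) for all g ∈ G and x ∈ ℝⁿ. If v ∈ ℝⁿ is a regular subgradient of f at x̄ ∈ ℝⁿ, then ⟨v, w⟩ = 0 for every w ∈ Im d(θ^(x̄))_e; that is, every regular subgradient of f at x̄ is orthogonal to the tangent space T_{x̄}(Gx̄) of the orbit of x̄. -/

import Mathlib

open scoped Manifold RealInnerProductSpace

/-- The tangent space `T_x(Gx) = Im d(θ^(x))_e` to the orbit of `x`, viewed as a linear
subspace of `ℝⁿ`, where `θ^(x) : G → ℝⁿ, g ↦ θ g x` is the orbit map. -/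
noncomputable def orbitTangent
    {E : Type*} [NormedAddCommGroup E] [NormedSpace ℝ E]
    {H : Type*} [TopologicalSpace H] (I : ModelWithCorners ℝ E H)
    {G : Type*} [TopologicalSpace G] [ChartedSpace H G] [Group G]
    {n : ℕ} (θ : G → EuclideanSpace ℝ (Fin n) → EuclideanSpace ℝ (Fin n))
    (x : EuclideanSpace ℝ (Fin n)) : Submodule ℝ (EuclideanSpace ℝ (Fin n)) :=
  LinearMap.range
    (ContinuousLinearMap.toLinearMap (show E →L[ℝ] EuclideanSpace ℝ (Fin n) from
      mfderiv I 𝓘(ℝ, EuclideanSpace ℝ (Fin n)) (fun g => θ g x) (1 : G)))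

/-- `v` is a regular (Fréchet) subgradient of `f` at `xbar`:
`f(x) ≥ f(xbar) + ⟪v, x − xbar⟫ − ε‖x − xbar‖` for `x` near `xbar`, for every `ε > 0`. -/
def IsRegularSubgradient {E : Type*} [NormedAddCommGroup E] [InnerProductSpace ℝ E]
    (f : E → ℝ) (xbar v : E) : Prop :=
  ∀ ε > (0 : ℝ), ∃ δ > (0 : ℝ), ∀ x : E, ‖x - xbar‖ ≤ δ →
    f x ≥ f xbar + ⟪v, x - xbar⟫ - ε * ‖x - xbar‖

/-! Invariance makes `f` constant along the orbit map `g ↦ θ g x̄` and along `g ↦ θ g⁻¹ x̄`.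
Since inversion has differential `-id` at `1`, these maps have differentials `L` and `-L` at `1`,
where `L = d(θ^(x̄))₁`. Read in a chart at `1`, the subgradient inequality bounds `⟪v, L (z - z₀)⟫`
above by `o(‖z - z₀‖)` along the first map and below by `-o(‖z - z₀‖)` along the second, so
`u ↦ ⟪v, L u⟫` is the derivative of a constant within the range of the model, a set of unique
differentiability; hence it vanishes. Both maps are needed because `z₀` may lie on the boundary of
that range. -/

open Filter Asymptotics Set
open scoped Topology

section LieGroup

variable {𝕜 : Type*} [NontriviallyNormedField 𝕜]
  {E : Type*} [NormedAddCommGroup E] [NormedSpace 𝕜 E]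
  {H : Type*} [TopologicalSpace H] {I : ModelWithCorners 𝕜 E H}
  {G : Type*} [TopologicalSpace G] [ChartedSpace H G] [Group G] [LieGroup I 1 G]

lemma mfderiv_mul_one_one :
    mfderiv (I.prod I) I (fun p : G × G => p.1 * p.2) (1, 1) =
      ContinuousLinearMap.fst 𝕜 E E + ContinuousLinearMap.snd 𝕜 E E := by
  ext v
  rw [mfderiv_prod_eq_add_apply ((contMDiff_mul I 1).mdifferentiableAt one_ne_zero),
    show (fun z : G => z * 1) = id from funext mul_one,
    show (fun z : G => 1 * z) = id from funext one_mul, mfderiv_id]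
  rfl

lemma hasMFDerivAt_inv_one :
    HasMFDerivAt I I (fun g : G => g⁻¹) 1 (-ContinuousLinearMap.id 𝕜 (TangentSpace I (1 : G))) := by
  have hinv := ((contMDiff_inv I 1).mdifferentiableAt one_ne_zero (x := (1 : G))).hasMFDerivAt
  have hmul : HasMFDerivAt (I.prod I) I (fun p : G × G => p.1 * p.2) (1, (1 : G)⁻¹)
      (ContinuousLinearMap.fst 𝕜 E E + ContinuousLinearMap.snd 𝕜 E E) := by
    rw [inv_one, ← mfderiv_mul_one_one]
    exact ((contMDiff_mul I 1).mdifferentiableAt one_ne_zero).hasMFDerivAt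
  have hconst : HasMFDerivAt I I (fun g : G => g * g⁻¹) 1 0 := by
    rw [show (fun g : G => g * g⁻¹) = fun _ => 1 from funext mul_inv_cancel]
    exact hasMFDerivAt_const _ _
  have hzero := hasMFDerivAt_unique (hmul.comp 1 ((hasMFDerivAt_id 1).prodMk hinv)) hconst
  suffices mfderiv I I (fun g : G => g⁻¹) 1 = -ContinuousLinearMap.id 𝕜 (TangentSpace I (1 : G))
    from this ▸ hinv
  exact eq_neg_of_add_eq_zero_right (ContinuousLinearMap.ext fun u => congr($hzero u))

variable {E' : Type*} [NormedAddCommGroup E'] [NormedSpace 𝕜 E']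
  {H' : Type*} [TopologicalSpace H'] {I' : ModelWithCorners 𝕜 E' H'}
  {M : Type*} [TopologicalSpace M] [ChartedSpace H' M]

lemma HasMFDerivAt.comp_inv_one {φ : G → M}
    {L : TangentSpace I (1 : G) →L[𝕜] TangentSpace I' (φ 1)}
    (hφ : HasMFDerivAt I I' φ 1 L) : HasMFDerivAt I I' (fun g => φ g⁻¹) 1 (-L) :=
  ((inv_one (G := G) ▸ hφ).comp 1 hasMFDerivAt_inv_one).congr_mfderiv
    (ContinuousLinearMap.ext fun u => map_neg L u)

end LieGroup

namespace IsRegularSubgradient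

variable {F : Type*} [NormedAddCommGroup F] [InnerProductSpace ℝ F] {f : F → ℝ} {xbar v : F}
  {E : Type*} [NormedAddCommGroup E] [NormedSpace ℝ E]

section NormedSpace

variable {ψ ψ' : E → F} {L : E →L[ℝ] F} {s : Set E} {z₀ : E}

lemma eventually_inner_apply_sub_le (hv : IsRegularSubgradient f xbar v)
    (hψ : HasFDerivWithinAt ψ L s z₀) (hψ₀ : ψ z₀ = xbar)
    (hfψ : ∀ᶠ z in 𝓝[s] z₀, f (ψ z) ≤ f xbar) {ε : ℝ} (hε : 0 < ε) :
    ∀ᶠ z in 𝓝[s] z₀, ⟪v, L (z - z₀)⟫ ≤ ε * ‖z - z₀‖ := by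
  subst hψ₀
  obtain ⟨C, hC, hψC⟩ := hψ.isBigO_sub.exists_pos
  obtain ⟨δ, hδ, hsub⟩ := hv (ε / (2 * C)) (by positivity)
  have hclose : ∀ᶠ z in 𝓝[s] z₀, ψ z ∈ Metric.closedBall (ψ z₀) δ :=
    hψ.continuousWithinAt.tendsto (Metric.closedBall_mem_nhds _ hδ)
  have hrem : ∀ᶠ z in 𝓝[s] z₀, ‖⟪v, ψ z - ψ z₀ - L (z - z₀)⟫‖ ≤ ε / 2 * ‖z - z₀‖ :=
    (((innerSL ℝ v).isBigO_comp _ _).trans_isLittleO hψ.isLittleO).def (half_pos hε)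
  filter_upwards [hψC.bound, hclose, hrem, hfψ] with z hCz hδz hrz hfz
  rw [Metric.mem_closedBall, dist_eq_norm] at hδz
  have hsubz := hsub (ψ z) hδz
  have hscale : ε / (2 * C) * ‖ψ z - ψ z₀‖ ≤ ε / 2 * ‖z - z₀‖ :=
    calc ε / (2 * C) * ‖ψ z - ψ z₀‖ ≤ ε / (2 * C) * (C * ‖z - z₀‖) := by gcongr
      _ = ε / 2 * ‖z - z₀‖ := by field_simp
  have hsplit : ⟪v, L (z - z₀)⟫ = ⟪v, ψ z - ψ z₀⟫ - ⟪v, ψ z - ψ z₀ - L (z - z₀)⟫ := by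
    rw [← inner_sub_right, sub_sub_cancel]
  rw [Real.norm_eq_abs, abs_le] at hrz
  linarith

lemma inner_eq_zero_of_hasFDerivWithinAt (hv : IsRegularSubgradient f xbar v)
    (hs : UniqueDiffWithinAt ℝ s z₀)
    (hψ : HasFDerivWithinAt ψ L s z₀) (hψ' : HasFDerivWithinAt ψ' (-L) s z₀)
    (hψ₀ : ψ z₀ = xbar) (hψ'₀ : ψ' z₀ = xbar)
    (hfψ : ∀ᶠ z in 𝓝[s] z₀, f (ψ z) ≤ f xbar) (hfψ' : ∀ᶠ z in 𝓝[s] z₀, f (ψ' z) ≤ f xbar)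
    (u : E) : ⟪v, L u⟫ = 0 := by
  set ℓ : E →L[ℝ] ℝ := (innerSL ℝ v).comp L
  have hℓ : HasFDerivWithinAt ℓ (0 : E →L[ℝ] ℝ) s z₀ := by
    refine HasFDerivWithinAt.of_isLittleO (isLittleO_iff.2 fun ε hε => ?_)
    filter_upwards [eventually_inner_apply_sub_le hv hψ hψ₀ hfψ hε,
      eventually_inner_apply_sub_le hv hψ' hψ'₀ hfψ' hε] with z hz hz'
    rw [neg_apply, inner_neg_right] at hz'
    simpa [ℓ, ← map_sub, abs_le, ← inner_sub_right] using ⟨by linarith, hz⟩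
  simpa [ℓ] using congr($(hs.eq ℓ.hasFDerivWithinAt hℓ) u)

end NormedSpace

variable {H : Type*} [TopologicalSpace H] {I : ModelWithCorners ℝ E H}
  {M : Type*} [TopologicalSpace M] [ChartedSpace H M] {φ φ' : M → F} {x : M} {L : E →L[ℝ] F}

lemma inner_eq_zero_of_hasMFDerivAt (hv : IsRegularSubgradient f xbar v)
    (hφ : HasMFDerivAt I 𝓘(ℝ, F) φ x L) (hφ' : HasMFDerivAt I 𝓘(ℝ, F) φ' x (-L))
    (hφx : φ x = xbar) (hφ'x : φ' x = xbar)
    (hfφ : ∀ᶠ y in 𝓝 x, f (φ y) ≤ f xbar) (hfφ' : ∀ᶠ y in 𝓝 x, f (φ' y) ≤ f xbar)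
    (u : E) : ⟪v, L u⟫ = 0 := by
  have hsymm : Tendsto (extChartAt I x).symm (𝓝[range I] extChartAt I x x) (𝓝 x) :=
    (map_extChartAt_symm_nhdsWithin_range x).le
  refine inner_eq_zero_of_hasFDerivWithinAt hv (I.uniqueDiffOn _ (mem_range_self _)) hφ.2 hφ'.2
    ?_ ?_ ?_ ?_ u
  · simp [writtenInExtChartAt, chartAt_self_eq, hφx]
  · simp [writtenInExtChartAt, chartAt_self_eq, hφ'x]
  · simpa [writtenInExtChartAt, chartAt_self_eq] using hsymm.eventually hfφ
  · simpa [writtenInExtChartAt, chartAt_self_eq] using hsymm.eventually hfφ'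

end IsRegularSubgradient

theorem stmt_15_general {n : ℕ}
    {E : Type*} [NormedAddCommGroup E] [NormedSpace ℝ E]
    {H : Type*} [TopologicalSpace H] {I : ModelWithCorners ℝ E H}
    {G : Type*} [TopologicalSpace G] [ChartedSpace H G] [Group G] [LieGroup I (⊤ : ℕ∞) G]
    (θ : G → EuclideanSpace ℝ (Fin n) → EuclideanSpace ℝ (Fin n))
    (hsmooth : ContMDiff (I.prod 𝓘(ℝ, EuclideanSpace ℝ (Fin n)))
      𝓘(ℝ, EuclideanSpace ℝ (Fin n)) (⊤ : ℕ∞) (fun p : G × EuclideanSpace ℝ (Fin n) => θ p.1 p.2))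
    (hone : ∀ x, θ 1 x = x)
    (f : EuclideanSpace ℝ (Fin n) → ℝ)
    (hinv : ∀ g x, f (θ g x) = f x)
    (xbar v : EuclideanSpace ℝ (Fin n))
    (hv : IsRegularSubgradient f xbar v) :
    ∀ w ∈ orbitTangent I θ xbar, ⟪v, w⟫ = 0 := by
  rintro _ ⟨u, rfl⟩
  have horbit : HasMFDerivAt I 𝓘(ℝ, EuclideanSpace ℝ (Fin n)) (fun g => θ g xbar) 1
      (mfderiv I 𝓘(ℝ, EuclideanSpace ℝ (Fin n)) (fun g => θ g xbar) 1) :=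
    ((hsmooth.comp (contMDiff_id.prodMk contMDiff_const)).mdifferentiableAt (by simp)).hasMFDerivAt
  exact hv.inner_eq_zero_of_hasMFDerivAt horbit horbit.comp_inv_one (hone xbar)
    (by simp [hone]) (.of_forall fun g => (hinv g xbar).le)
    (.of_forall fun g => (hinv g⁻¹ xbar).le) u

theorem stmt_15 {n : ℕ}
    {E : Type*} [NormedAddCommGroup E] [NormedSpace ℝ E] [FiniteDimensional ℝ E]
    {H : Type*} [TopologicalSpace H] {I : ModelWithCorners ℝ E H}
    {G : Type*} [TopologicalSpace G] [ChartedSpace H G] [Group G] [LieGroup I (⊤ : ℕ∞) G]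
    (θ : G → EuclideanSpace ℝ (Fin n) → EuclideanSpace ℝ (Fin n))
    (hsmooth : ContMDiff (I.prod 𝓘(ℝ, EuclideanSpace ℝ (Fin n)))
      𝓘(ℝ, EuclideanSpace ℝ (Fin n)) (⊤ : ℕ∞) (fun p : G × EuclideanSpace ℝ (Fin n) => θ p.1 p.2))
    (hmul : ∀ g h x, θ (g * h) x = θ g (θ h x))
    (hone : ∀ x, θ 1 x = x)
    (f : EuclideanSpace ℝ (Fin n) → ℝ)
    (hinv : ∀ g x, f (θ g x) = f x)
    (xbar v : EuclideanSpace ℝ (Fin n))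
    (hv : IsRegularSubgradient f xbar v) :
    ∀ w ∈ orbitTangent I θ xbar, ⟪v, w⟫ = 0 :=
  stmt_15_general θ hsmooth hone f hinv xbar v hv
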